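/- arXiv:2307.15608 — 3 statements merged into one kernel-verified Lean document; each statement's English description precedes it below -/
import Mathlib

section
/- Let K be a field, L a field extension of K, and A an associative unital K-algebra (not necessarily commutative). If the image of an element a ∈ A under the canonical K-algebra homomorphism A → L ⊗_K A, a ↦ 1 ⊗ a, is a unit of the L-algebra L ⊗_K A, then a is already a unit of A. -/
open scoped TensorProduct

/-- If the image of `a : A` under the canonical map `A → L ⊗[K] A`, `a ↦ 1 ⊗ a`,
is a unit of the `L`-algebra `L ⊗[K] A`, then `a` is a unit of `A`. -/
theorem unit_of_baseChange_unit {K L A : Type*} [Field K] [Field L] [Algebra K L]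
    [Ring A] [Algebra K A] (a : A)
    (h : IsUnit ((Algebra.TensorProduct.includeRight : A →ₐ[K] L ⊗[K] A) a)) :
    IsUnit a := by
  -- a K-linear retraction of K → L
  obtain ⟨c, hc⟩ := LinearMap.exists_leftInverse_of_injective
    (Algebra.linearMap K L) (by
      rw [LinearMap.ker_eq_bot]
      exact (algebraMap K L).injective)
  have hc1 : c 1 = 1 := by
    have := LinearMap.congr_fun hc 1
    simpa using this
  -- the K-linear map f : L ⊗ A → A, ℓ ⊗ x ↦ c ℓ • x
  set f : L ⊗[K] A →ₗ[K] A :=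
    TensorProduct.lift ((LinearMap.lsmul K A) ∘ₗ c) with hf
  have hf_tmul : ∀ (ℓ : L) (x : A), f (ℓ ⊗ₜ x) = c ℓ • x := fun ℓ x => rfl
  have key_r : ∀ x : L ⊗[K] A, f (x * (1 : L) ⊗ₜ[K] a) = f x * a := by
    intro x
    induction x using TensorProduct.induction_on with
    | zero => simp
    | tmul ℓ y =>
        rw [Algebra.TensorProduct.tmul_mul_tmul, hf_tmul, hf_tmul, mul_one,
          smul_mul_assoc]
    | add x y hx hy =>
        rw [add_mul, map_add, map_add, hx, hy, add_mul]
  have key_l : ∀ x : L ⊗[K] A, f ((1 : L) ⊗ₜ[K] a * x) = a * f x := by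
    intro x
    induction x using TensorProduct.induction_on with
    | zero => simp
    | tmul ℓ y =>
        rw [Algebra.TensorProduct.tmul_mul_tmul, hf_tmul, hf_tmul, one_mul,
          mul_smul_comm]
    | add x y hx hy =>
        rw [mul_add, map_add, map_add, hx, hy, mul_add]
  obtain ⟨u, hu⟩ := h
  have h1 : f (1 : L ⊗[K] A) = 1 := by
    rw [Algebra.TensorProduct.one_def, hf_tmul, hc1, one_smul]
  refine ⟨⟨a, f ↑u⁻¹, ?_, ?_⟩, rfl⟩
  · have := key_l ↑u⁻¹
    rw [show ((1 : L) ⊗ₜ[K] a) = (u : L ⊗[K] A) from hu.symm ▸ rfl] at this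
    rw [← this, u.mul_inv, h1]
  · have := key_r ↑u⁻¹
    rw [show ((1 : L) ⊗ₜ[K] a) = (u : L ⊗[K] A) from hu.symm ▸ rfl] at this
    rw [← this, u.inv_mul, h1]
end

section
/- Let L/K be a finite Galois extension with Galois group G (the group of field automorphisms of L fixing K pointwise) and let M be a K-vector space. For every g ∈ G let g ⊗ id_M denote the K-linear automorphism of L ⊗_K M determined by ℓ ⊗ m ↦ g(ℓ) ⊗ m. Then an element x ∈ L ⊗_K M satisfies (g ⊗ id_M)(x) = x for all g ∈ G if and only if x lies in the image of the K-linear map M → L ⊗_K M, m ↦ 1 ⊗ m. -/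
open scoped TensorProduct

private lemma fixed_mem_algebraMap_range {K L : Type*} [Field K] [Field L] [Algebra K L]
    [FiniteDimensional K L] [IsGalois K L] {l : L}
    (h : ∀ g : L ≃ₐ[K] L, g l = l) : ∃ k : K, algebraMap K L k = l := by
  have hl : l ∈ IntermediateField.fixedField
      (IntermediateField.fixingSubgroup (⊥ : IntermediateField K L)) := fun g => h g
  rw [IsGalois.fixedField_fixingSubgroup] at hl
  exact IntermediateField.mem_bot.mp hl

/-- For a finite Galois extension `L/K` with Galois group `G = (L ≃ₐ[K] L)` and a
`K`-vector space `M`, an element `x ∈ L ⊗[K] M` is fixed by all `g ⊗ id_M`, `g ∈ G`,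
if and only if it lies in the image of `M → L ⊗[K] M`, `m ↦ 1 ⊗ m`. -/
theorem galois_fixed_iff_mem_range_one_tmul {K L : Type*} [Field K] [Field L] [Algebra K L]
    [FiniteDimensional K L] [IsGalois K L]
    {M : Type*} [AddCommGroup M] [Module K M] (x : L ⊗[K] M) :
    (∀ g : L ≃ₐ[K] L, LinearMap.rTensor M g.toLinearMap x = x) ↔
      x ∈ LinearMap.range (TensorProduct.mk K L M 1) := by
  classical
  constructor
  · intro h
    set b := Module.Basis.ofVectorSpace K M with hb
    set B := Algebra.TensorProduct.basis L b with hB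
    set f := B.repr x with hf
    have key : ∀ (g : L ≃ₐ[K] L) (y : L ⊗[K] M),
        B.repr (LinearMap.rTensor M g.toLinearMap y)
          = (B.repr y).mapRange g (map_zero g) := by
      intro g y
      induction y using TensorProduct.induction_on with
      | zero => simp
      | tmul c m =>
          rw [LinearMap.rTensor_tmul]
          ext i
          simp [hB, Finsupp.mapRange_apply, Algebra.TensorProduct.basis_repr_tmul,
            Finsupp.smul_apply, smul_eq_mul, map_mul, AlgEquiv.commutes]
      | add u v hu hv =>
          ext i
          simp [Finsupp.mapRange_apply, hu, hv]
    have hfix : ∀ (g : L ≃ₐ[K] L) (i : _), g (f i) = f i := by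
      intro g i
      have := key g x
      rw [h g] at this
      have := DFunLike.congr_fun this.symm i
      simpa [Finsupp.mapRange_apply] using this
    have hex : ∀ i : Module.Basis.ofVectorSpaceIndex K M, ∃ k : K, algebraMap K L k = f i :=
      fun i => fixed_mem_algebraMap_range (fun g => hfix g i)
    choose k hk using hex
    refine ⟨f.support.sum fun i => k i • b i, ?_⟩
    have hx : f.sum (fun i c => c • B i) = x := B.linearCombination_repr x
    calc (TensorProduct.mk K L M 1) (f.support.sum fun i => k i • b i)
        = f.support.sum fun i => (1 : L) ⊗ₜ[K] (k i • b i) := by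
          simp [TensorProduct.mk_apply, TensorProduct.tmul_sum]
      _ = f.support.sum fun i => f i • B i := by
          refine Finset.sum_congr rfl fun i _ => ?_
          rw [TensorProduct.tmul_smul, ← hk i, algebraMap_smul, hB,
            Algebra.TensorProduct.basis_apply]
      _ = x := by rw [← hx]; rfl
  · rintro ⟨m, rfl⟩ g
    simp [TensorProduct.mk_apply]
end

section
/- Let K ⊆ L be fields, let n ≥ 1, and let v₁, …, vₙ be an L-basis of L^n. For each k ∈ {1, …, n} let p_k : L^n → L^k denote the projection onto the last k coordinates, and let F_k ⊆ L^k be the K-linear span of p_k(v₁), …, p_k(vₙ); assume that for every k the multiplication map L ⊗_K F_k → L^k, ℓ ⊗ w ↦ ℓ · w, is bijective (i.e. F_k is a K-lattice of L^k). Then there exist vectors w₁, …, wₙ ∈ L^n whose K-linear span equals the K-linear span of v₁, …, vₙ and such that the n × n matrix over L whose j-th column is w_j is upper triangular with nonzero diagonal entries (the i-th coordinate of w_j is 0 for i > j and nonzero for i = j). -/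
/-!
Write `F` for the `K`-span of the `vⱼ`, so that `F_k` is the image of `F` under the projection
to the last `k` coordinates, and induct on `n`. As `F₁` is a `K`-lattice of `L`, it is a line
`K a`; so some `x ∈ F` has `xₙ ≠ 0` and every `y ∈ F` has `yₙ ∈ K xₙ`, whence
`F = (F ∩ {yₙ = 0}) + K x`. The hyperplane `{yₙ = 0}` is `L^{n-1}`, and the last-`k` projections
of `F ∩ {yₙ = 0}` are the traces `F_{k+1} ∩ {last coordinate = 0}`. Such a trace of a lattice `E`
along `ker φ`, when `φ(E)` is a line `K φ(x)`, is again a lattice of `ker φ`: injectivity of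
`L ⊗ E → W` survives by flatness, and `ker φ` is spanned because the projection
`w ↦ w - (φ w / φ x) x` onto `ker φ` maps `E` into `E ∩ ker φ`. Triangularize `F ∩ {yₙ = 0}`
by induction and append `x` as the last column.
-/

open scoped TensorProduct

/-- The projection `L^n → L^k` onto the last `k` coordinates (junk value `0` out of range). -/
noncomputable def lastCoordsProj {L : Type*} [Zero L] (n k : ℕ) (x : Fin n → L) (i : Fin k) : L :=
  if h : n - k + i.val < n then x ⟨n - k + i.val, h⟩ else 0

namespace Submodule

variable {K L W V : Type*} [Field K] [Field L] [Algebra K L]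
  [AddCommGroup W] [Module K W] [Module L W] [IsScalarTower K L W]
  [AddCommGroup V] [Module K V] [Module L V] [IsScalarTower K L V]

variable (L) in
def IsKLattice (E : Submodule K W) : Prop :=
  Function.Bijective (LinearMap.liftBaseChange L E.subtype)

theorem surjective_liftBaseChange_subtype_iff (E : Submodule K W) :
    Function.Surjective (LinearMap.liftBaseChange L E.subtype) ↔ span L (E : Set W) = ⊤ := by
  rw [← LinearMap.range_eq_top, LinearMap.range_liftBaseChange, range_subtype]

theorem injective_liftBaseChange_subtype_comap {E : Submodule K W}
    (hE : Function.Injective (LinearMap.liftBaseChange L E.subtype))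
    {ι : V →ₗ[L] W} (hι : Function.Injective ι) :
    Function.Injective
      (LinearMap.liftBaseChange L (E.comap (ι.restrictScalars K)).subtype) := by
  set incl := (ι.restrictScalars K).restrict (p := E.comap (ι.restrictScalars K)) (q := E)
    fun _ hx => hx
  have hincl : Function.Injective (incl.baseChange L) := by
    rw [LinearMap.baseChange_eq_ltensor]
    exact Module.Flat.lTensor_preserves_injective_linearMap incl
      fun x y h => Subtype.ext (hι (congrArg Subtype.val h))
  have hcomm : ι ∘ₗ LinearMap.liftBaseChange L (E.comap (ι.restrictScalars K)).subtype =
      E.subtype.liftBaseChange L ∘ₗ incl.baseChange L := by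
    ext; simp [incl]
  refine .of_comp (f := ι) ?_
  rw [← LinearMap.coe_comp, hcomm, LinearMap.coe_comp]
  exact hE.comp hincl

theorem span_comap_eq_top {E : Submodule K W} (hE : span L (E : Set W) = ⊤)
    {ι : V →ₗ[L] W} (hι : Function.Injective ι) {φ : W →ₗ[L] L}
    (hιφ : LinearMap.range ι = LinearMap.ker φ)
    {x : W} (hx : x ∈ E) (hφx : φ x ≠ 0) (hφE : ∀ e ∈ E, ∃ c : K, φ e = c • φ x) :
    span L (E.comap (ι.restrictScalars K) : Set V) = ⊤ := by
  set P : W →ₗ[L] W := LinearMap.id - (φ x)⁻¹ • φ.smulRight x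
  have hP_apply (w : W) : P w = w - (φ w / φ x) • x := by simp [P, mul_smul, div_eq_inv_mul]
  have hP_range (w : W) : P w ∈ LinearMap.range ι := by
    rw [hιφ, LinearMap.mem_ker, hP_apply, map_sub, map_smul, smul_eq_mul,
      div_mul_cancel₀ _ hφx, sub_self]
  have hP_mem {e : W} (he : e ∈ E) : P e ∈ E := by
    obtain ⟨c, hc⟩ := hφE e he
    rw [hP_apply, hc, Algebra.smul_def, mul_div_cancel_right₀ _ hφx, algebraMap_smul]
    exact sub_mem he (smul_mem _ c hx)
  have hP_image : P '' E ⊆ ι '' (E.comap (ι.restrictScalars K)) := by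
    rintro _ ⟨e, he, rfl⟩
    obtain ⟨v, hv⟩ := hP_range e
    exact ⟨v, show ι v ∈ E from hv ▸ hP_mem he, hv⟩
  refine eq_top_iff.2 fun v _ => ?_
  have hv : ι v ∈ map ι (span L (E.comap (ι.restrictScalars K) : Set V)) := by
    have hPv : P (ι v) = ι v := by
      rw [hP_apply, LinearMap.mem_ker.1 (hιφ.le (LinearMap.mem_range_self ι v)), zero_div,
        zero_smul, sub_zero]
    rw [← hPv, map_span]
    refine span_mono hP_image ?_
    rw [← map_span, hE]
    exact mem_map_of_mem mem_top
  obtain ⟨v', hv', hvv'⟩ := hv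
  exact hι hvv' ▸ hv'

theorem IsKLattice.comap {E : Submodule K W} (hE : E.IsKLattice L)
    {ι : V →ₗ[L] W} (hι : Function.Injective ι) {φ : W →ₗ[L] L}
    (hιφ : LinearMap.range ι = LinearMap.ker φ)
    {x : W} (hx : x ∈ E) (hφx : φ x ≠ 0) (hφE : ∀ e ∈ E, ∃ c : K, φ e = c • φ x) :
    (E.comap (ι.restrictScalars K)).IsKLattice L :=
  ⟨injective_liftBaseChange_subtype_comap hE.1 hι,
    (surjective_liftBaseChange_subtype_iff _).2 <|
      span_comap_eq_top ((surjective_liftBaseChange_subtype_iff _).1 hE.2) hι hιφ hx hφx hφE⟩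

theorem IsKLattice.exists_eq_smul_of_rank_eq_one {E : Submodule K W} (hE : E.IsKLattice L)
    (hW : Module.rank L W = 1) : ∃ a ∈ E, a ≠ 0 ∧ ∀ e ∈ E, ∃ c : K, e = c • a := by
  have hrank : Module.rank K E = 1 := by
    have := (LinearEquiv.ofBijective _ hE).lift_rank_eq
    rwa [Module.rank_baseChange, hW, Cardinal.lift_lift, Cardinal.lift_one,
      Cardinal.lift_eq_one] at this
  obtain ⟨a, ha, hE⟩ := rank_eq_one_iff.1 hrank
  refine ⟨a, a.2, by simpa using ha, fun e he => ?_⟩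
  obtain ⟨c, hc⟩ := hE ⟨e, he⟩
  exact ⟨c, by simpa using (congrArg Subtype.val hc).symm⟩

theorem map_comap_sup_span_singleton {F : Submodule K W} {ι : V →ₗ[L] W} {φ : W →ₗ[L] L}
    (hιφ : LinearMap.range ι = LinearMap.ker φ)
    {x : W} (hx : x ∈ F) (hφE : ∀ y ∈ F, ∃ c : K, φ y = c • φ x) :
    (F.comap (ι.restrictScalars K)).map (ι.restrictScalars K) ⊔ K ∙ x = F := by
  refine le_antisymm (sup_le (map_comap_le _ _) ((span_singleton_le_iff_mem _ _).2 hx))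
    fun y hy => ?_
  obtain ⟨c, hc⟩ := hφE y hy
  have hker : y - c • x ∈ LinearMap.range (ι.restrictScalars K) := by
    rw [LinearMap.range_restrictScalars, restrictScalars_mem, hιφ, LinearMap.mem_ker, map_sub,
      LinearMap.map_smul_of_tower, hc, sub_self]
  rw [← sub_add_cancel y (c • x)]
  exact add_mem_sup (by rw [map_comap_eq]; exact ⟨hker, sub_mem hy (smul_mem _ c hx)⟩)
    (smul_mem _ c (mem_span_singleton_self x))

end Submodule

section LastCoords

variable (R : Type*) [Semiring R]

noncomputable def lastCoordsLinearMap (n k : ℕ) : (Fin n → R) →ₗ[R] (Fin k → R) where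
  toFun := lastCoordsProj n k
  map_add' x y := by ext i; simp only [lastCoordsProj, Pi.add_apply]; split <;> simp
  map_smul' c x := by ext i; simp only [lastCoordsProj, Pi.smul_apply]; split <;> simp

def snocZero (n : ℕ) : (Fin n → R) →ₗ[R] (Fin (n + 1) → R) where
  toFun x := Fin.snoc x 0
  map_add' x y := by ext i; refine Fin.lastCases ?_ (fun i => ?_) i <;> simp
  map_smul' c x := by ext i; refine Fin.lastCases ?_ (fun i => ?_) i <;> simp

variable {R}

@[simp]
theorem lastCoordsLinearMap_apply (n k : ℕ) (x : Fin n → R) :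
    lastCoordsLinearMap R n k x = lastCoordsProj n k x := rfl

@[simp]
theorem snocZero_apply (n : ℕ) (x : Fin n → R) : snocZero R n x = Fin.snoc x 0 := rfl

theorem snocZero_injective (n : ℕ) : Function.Injective (snocZero R n) := fun x y h => by
  simpa using h

theorem range_snocZero (n : ℕ) :
    LinearMap.range (snocZero R n) = LinearMap.ker (LinearMap.proj (R := R) (Fin.last n)) := by
  ext y
  refine ⟨?_, fun hy => ⟨Fin.init y, ?_⟩⟩
  · rintro ⟨x, rfl⟩
    simp
  · simp [← LinearMap.mem_ker.1 hy]

theorem lastCoordsProj_succ_last {n k : ℕ} (hk : k ≤ n) (y : Fin (n + 1) → R) :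
    lastCoordsProj (n + 1) (k + 1) y (Fin.last k) = y (Fin.last n) := by
  rw [lastCoordsProj, dif_pos (by rw [Fin.val_last]; omega)]
  exact congrArg y (Fin.ext (by simp only [Fin.val_last]; omega))

theorem lastCoordsProj_snoc_zero (n k : ℕ) (x : Fin n → R) :
    lastCoordsProj (n + 1) (k + 1) (Fin.snoc x 0) = Fin.snoc (lastCoordsProj n k x) 0 := by
  ext i
  refine Fin.lastCases ?_ (fun i => ?_) i
  · simp only [lastCoordsProj, Fin.snoc, Fin.val_last]
    split_ifs <;> first | rfl | omega
  · rw [Fin.snoc_castSucc]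
    simp only [lastCoordsProj, Fin.snoc, Fin.val_castSucc]
    split_ifs
    all_goals first | rfl | omega | (rw [cast_eq]; congr 1; ext; simp)

end LastCoords

namespace Submodule

variable {K L : Type*} [Field K] [Field L] [Algebra K L]

noncomputable def lastCoords {n : ℕ} (F : Submodule K (Fin n → L)) (k : ℕ) :
    Submodule K (Fin k → L) :=
  F.map ((lastCoordsLinearMap L n k).restrictScalars K)

theorem exists_mem_last_ne_zero {n : ℕ} {F : Submodule K (Fin (n + 1) → L)}
    (hF : (F.lastCoords 1).IsKLattice L) :
    ∃ x ∈ F, x (Fin.last n) ≠ 0 ∧ ∀ y ∈ F, ∃ c : K, y (Fin.last n) = c • x (Fin.last n) := by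
  have hlast (y : Fin (n + 1) → L) :
      (lastCoordsLinearMap L (n + 1) 1).restrictScalars K y (Fin.last 0) = y (Fin.last n) :=
    lastCoordsProj_succ_last n.zero_le y
  obtain ⟨_, ⟨x, hx, rfl⟩, hx0, hF⟩ := hF.exists_eq_smul_of_rank_eq_one (by simp)
  refine ⟨x, hx, fun h => hx0 (funext fun i => ?_), fun y hy => ?_⟩
  · rw [Subsingleton.elim i (Fin.last 0), hlast, h, Pi.zero_apply]
  · obtain ⟨c, hc⟩ := hF _ ⟨y, hy, rfl⟩
    exact ⟨c, by rw [← hlast y, hc, Pi.smul_apply, hlast]⟩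

theorem lastCoords_comap_snocZero {n k : ℕ} (hk : k ≤ n) (F : Submodule K (Fin (n + 1) → L)) :
    (F.comap ((snocZero L n).restrictScalars K)).lastCoords k =
      (F.lastCoords (k + 1)).comap ((snocZero L k).restrictScalars K) := by
  have hcomm (g : Fin n → L) : lastCoordsProj (n + 1) (k + 1) (snocZero L n g) =
      snocZero L k (lastCoordsProj n k g) :=
    lastCoordsProj_snoc_zero n k g
  ext z
  constructor
  · rintro ⟨g, hg, rfl⟩
    exact ⟨_, hg, hcomm g⟩
  · rintro ⟨y, hy, hyz⟩
    have hy0 : y ∈ LinearMap.ker (LinearMap.proj (R := L) (Fin.last n)) := by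
      have := congrFun hyz (Fin.last k)
      simp only [LinearMap.restrictScalars_apply, lastCoordsLinearMap_apply, snocZero_apply,
        Fin.snoc_last, lastCoordsProj_succ_last hk] at this
      exact this
    obtain ⟨g, rfl⟩ := (range_snocZero n).ge hy0
    exact ⟨g, hy, snocZero_injective k ((hcomm g).symm.trans hyz)⟩

theorem isKLattice_lastCoords_comap_snocZero {n k : ℕ} (hk : k ≤ n)
    {F : Submodule K (Fin (n + 1) → L)} (hF : (F.lastCoords (k + 1)).IsKLattice L)
    {x : Fin (n + 1) → L} (hx : x ∈ F) (hx0 : x (Fin.last n) ≠ 0)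
    (hxF : ∀ y ∈ F, ∃ c : K, y (Fin.last n) = c • x (Fin.last n)) :
    ((F.comap ((snocZero L n).restrictScalars K)).lastCoords k).IsKLattice L := by
  rw [lastCoords_comap_snocZero hk]
  refine hF.comap (snocZero_injective k) (range_snocZero k) ⟨x, hx, rfl⟩ ?_ ?_
  · simpa [lastCoordsProj_succ_last hk] using hx0
  · rintro _ ⟨y, hy, rfl⟩
    simpa [lastCoordsProj_succ_last hk] using hxF y hy

theorem exists_upperTriangular_span_eq :
    ∀ {n : ℕ} (F : Submodule K (Fin n → L)),
      (∀ k, 1 ≤ k → k ≤ n → (F.lastCoords k).IsKLattice L) →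
      ∃ w : Fin n → Fin n → L, span K (Set.range w) = F ∧
        (∀ i j : Fin n, j < i → w j i = 0) ∧ ∀ j : Fin n, w j j ≠ 0
  | 0, F, _ => ⟨Fin.elim0, by simp [Subsingleton.elim F ⊥], fun i => i.elim0, fun j => j.elim0⟩
  | n + 1, F, hF => by
    obtain ⟨x, hx, hx0, hxF⟩ := exists_mem_last_ne_zero (hF 1 le_rfl (by omega))
    obtain ⟨w, hw, hwtri, hwdiag⟩ := exists_upperTriangular_span_eq
      (F.comap ((snocZero L n).restrictScalars K)) fun k hk hkn =>
        isKLattice_lastCoords_comap_snocZero hkn (hF (k + 1) (by omega) (by omega)) hx hx0 hxF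
    refine ⟨Fin.snoc (fun j => Fin.snoc (w j) 0) x, ?_, ?_, ?_⟩
    · have himage : Set.range (fun j => Fin.snoc (w j) 0 : Fin n → Fin (n + 1) → L) =
          (snocZero L n).restrictScalars K '' Set.range w :=
        Set.range_comp (⇑((snocZero L n).restrictScalars K)) w
      rw [Fin.range_snoc, span_insert, himage, span_image, hw, sup_comm]
      exact map_comap_sup_span_singleton (range_snocZero n) hx hxF
    · intro i j hji
      induction j using Fin.lastCases with
      | last => exact absurd hji (Fin.le_last i).not_gt
      | cast j =>
        induction i using Fin.lastCases with
        | last => simp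
        | cast i => simpa using hwtri i j (Fin.castSucc_lt_castSucc_iff.1 hji)
    · intro j
      induction j using Fin.lastCases with
      | last => simpa using hx0
      | cast j => simpa using hwdiag j

end Submodule

theorem lattice_triangularization_general {K L : Type*} [Field K] [Field L] [Algebra K L]
    {n : ℕ} (v : Fin n → (Fin n → L))
    (hlattice : ∀ k : ℕ, 1 ≤ k → k ≤ n →
      Function.Bijective (LinearMap.liftBaseChange L
        (Submodule.span K (Set.range fun j : Fin n => lastCoordsProj n k (v j))).subtype)) :
    ∃ w : Fin n → (Fin n → L),
      Submodule.span K (Set.range w) = Submodule.span K (Set.range v) ∧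
      (∀ i j : Fin n, j < i → w j i = 0) ∧
      (∀ j : Fin n, w j j ≠ 0) := by
  refine Submodule.exists_upperTriangular_span_eq _ fun k hk hkn => ?_
  rw [Submodule.lastCoords, Submodule.map_span, ← Set.range_comp]
  exact hlattice k hk hkn

/-- If `v₁, …, vₙ` is an `L`-basis of `L^n` such that for every `1 ≤ k ≤ n` the `K`-span
`F_k` of the projections of the `vⱼ` onto the last `k` coordinates is a `K`-lattice of `L^k`
(i.e. the multiplication map `L ⊗[K] F_k → L^k` is bijective), then there are vectors
`w₁, …, wₙ` with the same `K`-span as `v₁, …, vₙ` forming an upper triangular matrix with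
nonzero diagonal entries. -/
theorem lattice_triangularization {K L : Type*} [Field K] [Field L] [Algebra K L]
    {n : ℕ} (hn : 1 ≤ n) (v : Fin n → (Fin n → L))
    (hindep : LinearIndependent L v) (hspan : Submodule.span L (Set.range v) = ⊤)
    (hlattice : ∀ k : ℕ, 1 ≤ k → k ≤ n →
      Function.Bijective (LinearMap.liftBaseChange L
        (Submodule.span K (Set.range fun j : Fin n => lastCoordsProj n k (v j))).subtype)) :
    ∃ w : Fin n → (Fin n → L),
      Submodule.span K (Set.range w) = Submodule.span K (Set.range v) ∧
      (∀ i j : Fin n, j < i → w j i = 0) ∧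
      (∀ j : Fin n, w j j ≠ 0) :=
  lattice_triangularization_general v hlattice
end
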